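/- arXiv:2503.13094 — 2 statements merged into one kernel-verified Lean document; each statement's English description precedes it below -/
import Mathlib

section
/- Let $L < R$, $y \in (L,R)$, $\Delta t > 0$, $g \in \mathbb{R}$, $w \in \mathbb{R}$, and suppose $f_L \ge 0$, $f_R \le 0$, $F^L = \frac{f - f_L}{y - L}$, $F^R = \frac{f - f_R}{y - R}$ for some $f \in \mathbb{R}$. Define $\alpha^L = F^L - \tfrac12 g^2 (R-y)^2$, $\beta^L = g(R-y)$, $\alpha^R = F^R - \tfrac12 g^2 (y-L)^2$, $\beta^R = -g(y-L)$, and $Y^L = L + e^{\alpha^L \Delta t + \beta^L w}(y + f_L \Delta t - L)$, $Y^R = R - e^{\alpha^R \Delta t + \beta^R w}(R - y - f_R \Delta t)$. Then it is impossible that both $Y^L \ge R$ and $Y^R \le L$. -/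
open Set Real

theorem no_simultaneous_overshoot (L R y Δt g w f fL fR FL FR αL βL αR βR YL YR : ℝ)
    (hLR : L < R) (hy : y ∈ Ioo L R) (hΔt : 0 < Δt)
    (hfL : 0 ≤ fL) (hfR : fR ≤ 0)
    (hFL : FL = (f - fL) / (y - L))
    (hFR : FR = (f - fR) / (y - R))
    (hαL : αL = FL - (1/2) * g^2 * (R - y)^2)
    (hβL : βL = g * (R - y))
    (hαR : αR = FR - (1/2) * g^2 * (y - L)^2)
    (hβR : βR = -(g * (y - L)))
    (hYL : YL = L + Real.exp (αL * Δt + βL * w) * (y + fL * Δt - L))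
    (hYR : YR = R - Real.exp (αR * Δt + βR * w) * (R - y - fR * Δt)) :
    ¬ (YL ≥ R ∧ YR ≤ L) := by
  rintro ⟨h1, h2⟩
  obtain ⟨hyL, hyR⟩ := hy
  have ha : 0 < y - L := by linarith
  have hb : 0 < R - y := by linarith
  have hab : 0 < R - L := by linarith
  have hA : 0 < y - L + fL * Δt := by nlinarith
  have hB : 0 < R - y - fR * Δt := by nlinarith
  -- overshoot inequalities in exponential form
  have e1 : R - L ≤ Real.exp (αL * Δt + βL * w) * (y - L + fL * Δt) := by
    have : y + fL * Δt - L = y - L + fL * Δt := by ring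
    rw [hYL, this] at h1; linarith
  have e2 : R - L ≤ Real.exp (αR * Δt + βR * w) * (R - y - fR * Δt) := by
    rw [hYR] at h2; linarith
  -- logarithmic form
  have hlog1 : Real.log (R - L) ≤ (αL * Δt + βL * w) + Real.log (y - L + fL * Δt) := by
    have h := Real.log_le_log (by linarith : 0 < R - L) e1
    rwa [Real.log_mul (Real.exp_ne_zero _) (ne_of_gt hA), Real.log_exp] at h
  have hlog2 : Real.log (R - L) ≤ (αR * Δt + βR * w) + Real.log (R - y - fR * Δt) := by
    have h := Real.log_le_log (by linarith : 0 < R - L) e2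
    rwa [Real.log_mul (Real.exp_ne_zero _) (ne_of_gt hB), Real.log_exp] at h
  -- log(x + c) ≤ log x + c/x
  have hbound1 : Real.log (y - L + fL * Δt) ≤ Real.log (y - L) + fL * Δt / (y - L) := by
    have h := Real.log_le_sub_one_of_pos (div_pos hA ha)
    rw [Real.log_div (ne_of_gt hA) (ne_of_gt ha)] at h
    have hd : (y - L + fL * Δt) / (y - L) - 1 = fL * Δt / (y - L) := by
      field_simp
      ring
    linarith
  have hbound2 : Real.log (R - y - fR * Δt) ≤ Real.log (R - y) - fR * Δt / (R - y) := by
    have h := Real.log_le_sub_one_of_pos (div_pos hB hb)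
    rw [Real.log_div (ne_of_gt hB) (ne_of_gt hb)] at h
    have hd : (R - y - fR * Δt) / (R - y) - 1 = -(fR * Δt / (R - y)) := by
      field_simp
      ring
    linarith
  -- multiplied inequalities
  have hd1 : (y - L) * (fL * Δt / (y - L)) = fL * Δt := by field_simp
  have hd2 : (R - y) * (fR * Δt / (R - y)) = fR * Δt := by field_simp
  have c1 : Real.log (R - L) ≤ (αL * Δt + βL * w) + Real.log (y - L) + fL * Δt / (y - L) := by
    linarith
  have c2 : Real.log (R - L) ≤ (αR * Δt + βR * w) + Real.log (R - y) - fR * Δt / (R - y) := by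
    linarith
  -- key algebraic identities
  have kFL : (y - L) * FL = f - fL := by
    rw [hFL]; field_simp
  have kFR : (R - y) * FR = fR - f := by
    rw [hFR]
    have hyR' : y - R ≠ 0 := by linarith
    field_simp
    ring
  have m1 : (y - L) * Real.log (R - L) ≤
      (y - L) * (αL * Δt + βL * w) + (y - L) * Real.log (y - L) + fL * Δt := by
    have h := mul_le_mul_of_nonneg_left c1 ha.le
    have hr : (y - L) * ((αL * Δt + βL * w) + Real.log (y - L) + fL * Δt / (y - L)) =
        (y - L) * (αL * Δt + βL * w) + (y - L) * Real.log (y - L) +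
          (y - L) * (fL * Δt / (y - L)) := by ring
    rw [hr, hd1] at h
    linarith
  have m2 : (R - y) * Real.log (R - L) ≤
      (R - y) * (αR * Δt + βR * w) + (R - y) * Real.log (R - y) - fR * Δt := by
    have h := mul_le_mul_of_nonneg_left c2 hb.le
    have hr : (R - y) * ((αR * Δt + βR * w) + Real.log (R - y) - fR * Δt / (R - y)) =
        (R - y) * (αR * Δt + βR * w) + (R - y) * Real.log (R - y) -
          (R - y) * (fR * Δt / (R - y)) := by ring
    rw [hr, hd2] at h
    linarith
  have key : (y - L) * (αL * Δt + βL * w) + (R - y) * (αR * Δt + βR * w) =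
      (fR - fL) * Δt - (1/2) * (g^2 * ((y - L) * ((R - y) * (R - L)))) * Δt := by
    rw [hαL, hβL, hαR, hβR]
    linear_combination Δt * kFL + Δt * kFR
  -- strict comparison of logs
  have s1 : Real.log (y - L) < Real.log (R - L) := Real.log_lt_log ha (by linarith)
  have s2 : Real.log (R - y) < Real.log (R - L) := Real.log_lt_log hb (by linarith)
  have s1' := mul_lt_mul_of_pos_left s1 ha
  have s2' := mul_lt_mul_of_pos_left s2 hb
  have hg : 0 ≤ (1/2) * (g ^ 2 * ((y - L) * ((R - y) * (R - L)))) * Δt := by positivity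
  have hfRL : (fR - fL) * Δt ≤ 0 := mul_nonpos_of_nonpos_of_nonneg (by linarith) hΔt.le
  have hsplit : (y - L) * Real.log (R - L) + (R - y) * Real.log (R - L) =
      (R - L) * Real.log (R - L) := by ring
  linarith
end

section
/- Let $L < R$, $K_f \ge 0$, $K_g \ge 0$. Suppose $f, g : \mathbb{R} \to \mathbb{R}$ satisfy $-K_f (y-L) \le f(y) \le K_f (R-y)$ and $|g(y)| \le K_g$ for all $y \in (L,R)$. Define for $y \in (L,R)$: $\mathcal{L}V(y) := \Big(-\frac{1}{(y-L)^2} + \frac{1}{(R-y)^2}\Big) f(y) + g(y)^2 (y-L)^2 (R-y)^2 \Big(\frac{1}{(y-L)^3} + \frac{1}{(R-y)^3}\Big)$. Then $\mathcal{L}V(y) \le \big(K_f + K_g^2 (R-L)^2\big)\Big(\frac{1}{y-L} + \frac{1}{R-y}\Big)$ for all $y \in (L,R)$. -/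
open Set

theorem generator_bound (L R Kf Kg : ℝ) (hLR : L < R) (hKf : 0 ≤ Kf) (hKg : 0 ≤ Kg)
    (f g : ℝ → ℝ)
    (hf : ∀ y ∈ Ioo L R, -Kf * (y - L) ≤ f y ∧ f y ≤ Kf * (R - y))
    (hg : ∀ y ∈ Ioo L R, |g y| ≤ Kg) :
    ∀ y ∈ Ioo L R,
      (-(1 / (y - L)^2) + 1 / (R - y)^2) * f y
        + (g y)^2 * (y - L)^2 * (R - y)^2 * (1 / (y - L)^3 + 1 / (R - y)^3)
      ≤ (Kf + Kg^2 * (R - L)^2) * (1 / (y - L) + 1 / (R - y)) := by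
  intro y hy
  obtain ⟨hy1, hy2⟩ := hy
  obtain ⟨hf1, hf2⟩ := hf y ⟨hy1, hy2⟩
  have hgy := hg y ⟨hy1, hy2⟩
  have ha : 0 < y - L := by linarith
  have hb : 0 < R - y := by linarith
  have hg2 : (g y)^2 ≤ Kg^2 := by
    nlinarith [sq_abs (g y), abs_nonneg (g y)]
  rw [← mul_le_mul_iff_of_pos_right (show (0:ℝ) < (y - L)^3 * (R - y)^3 by positivity)]
  have e1 : ((-(1 / (y - L)^2) + 1 / (R - y)^2) * f y
        + (g y)^2 * (y - L)^2 * (R - y)^2 * (1 / (y - L)^3 + 1 / (R - y)^3))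
        * ((y - L)^3 * (R - y)^3)
      = (y - L) * (R - y) * ((y - L)^2 - (R - y)^2) * f y
        + (g y)^2 * (y - L)^2 * (R - y)^2 * ((y - L)^3 + (R - y)^3) := by
    field_simp
    ring
  have e2 : (Kf + Kg^2 * (R - L)^2) * (1 / (y - L) + 1 / (R - y))
        * ((y - L)^3 * (R - y)^3)
      = (Kf + Kg^2 * (R - L)^2) * ((y - L) + (R - y)) * (y - L)^2 * (R - y)^2 := by
    field_simp
    ring
  rw [e1, e2]
  have h1 : 0 ≤ (y - L) * (R - y)^3 * (f y + Kf * (y - L)) :=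
    mul_nonneg (mul_nonneg ha.le (pow_pos hb 3).le) (by linarith)
  have h2 : 0 ≤ (y - L)^3 * (R - y) * (Kf * (R - y) - f y) :=
    mul_nonneg (mul_nonneg (pow_pos ha 3).le hb.le) (by linarith)
  have h3 : 0 ≤ (y - L)^2 * (R - y)^2 * ((y - L)^3 + (R - y)^3) * (Kg^2 - (g y)^2) :=
    mul_nonneg (mul_nonneg (mul_nonneg (pow_pos ha 2).le (pow_pos hb 2).le)
      (by positivity)) (by linarith)
  have h4 : 0 ≤ Kg^2 * (y - L)^3 * (R - y)^3 * ((y - L) + (R - y)) :=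
    mul_nonneg (mul_nonneg (mul_nonneg (sq_nonneg Kg) (pow_pos ha 3).le) (pow_pos hb 3).le)
      (by linarith)
  linarith [h1, h2, h3, h4]
end
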